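/- arXiv:2204.10313 — 2 statements merged into one kernel-verified Lean document; each statement's English description precedes it below -/
import Mathlib

section
/- Fix n, m ∈ {1,…,N}. Regard S_m(x) as a function of the n-th site point x_n (all other sites, all matrices D_k, the evaluation point x, and ε_s ≥ 0 being fixed). If x ≠ x_n, then this function is differentiable at x_n and its gradient equals S_m(x)·(S_n(x) − δ_{mn})·Y_n(x), where Y_n(x) = A_n(x_n − x)/d_n(x, x_n) and δ_{mn} is the Kronecker delta. -/
/-!
Moving the site `x_n` to `q` changes only the weight `e(q) = exp(-d_n(x, q))`, so `S_m` becomes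
`e(q) / (e(q) + K)` if `m = n` and `c / (e(q) + K)` otherwise, with `K` and `c` independent of `q`.
Differentiating these quotients gives `S_m (S_n - δ_{mn}) ∇_q d_n(x, q)`, and for the symmetric
matrix `A_n` this gradient is `A_n (q - x) / d_n(x, q)`; it exists because `A_n = D_n D_nᵀ` is
positive definite, so `d_n(x, x_n) ≠ 0` when `x ≠ x_n`.
-/

open Matrix

/-- The anisotropic (Mahalanobis-type) length `sqrt(uᵀ A u)`. -/
noncomputable def mdist {d : ℕ} (A : Matrix (Fin d) (Fin d) ℝ) (u : Fin d → ℝ) : ℝ :=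
  Real.sqrt (u ⬝ᵥ A.mulVec u)

/-- The denominator `ε_s + ∑_{k=1}^N exp(−d_k(x, x_k))` with `A_k = D_k D_kᵀ`. -/
noncomputable def Sden {d N : ℕ} (p : Fin N → Fin d → ℝ)
    (D : Fin N → Matrix (Fin d) (Fin d) ℝ) (ε : ℝ) (x : Fin d → ℝ) : ℝ :=
  ε + ∑ k, Real.exp (-(mdist (D k * (D k)ᵀ) (x - p k)))

/-- `S_m(x) = exp(−d_m(x, x_m)) / (ε_s + ∑_k exp(−d_k(x, x_k)))` for `m = 1,…,N`. -/
noncomputable def S {d N : ℕ} (p : Fin N → Fin d → ℝ)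
    (D : Fin N → Matrix (Fin d) (Fin d) ℝ) (ε : ℝ) (x : Fin d → ℝ) (m : Fin N) : ℝ :=
  Real.exp (-(mdist (D m * (D m)ᵀ) (x - p m))) / Sden p D ε x

/-- `S_0(x) = ε_s / (ε_s + ∑_k exp(−d_k(x, x_k)))`. -/
noncomputable def S0 {d N : ℕ} (p : Fin N → Fin d → ℝ)
    (D : Fin N → Matrix (Fin d) (Fin d) ℝ) (ε : ℝ) (x : Fin d → ℝ) : ℝ :=
  ε / Sden p D ε x

noncomputable def dotProductCLM {ι : Type*} [Fintype ι] (c : ι → ℝ) : (ι → ℝ) →L[ℝ] ℝ :=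
  LinearMap.toContinuousLinearMap (dotProductBilin ℝ ℝ c)

@[simp] lemma dotProductCLM_apply {ι : Type*} [Fintype ι] (c w : ι → ℝ) :
    dotProductCLM c w = c ⬝ᵥ w := rfl

lemma hasFDerivAt_dotProduct_mulVec_self {ι : Type*} [Fintype ι] {A : Matrix ι ι ℝ}
    (hA : A.IsSymm) (u₀ : ι → ℝ) :
    HasFDerivAt (fun u => u ⬝ᵥ A *ᵥ u) (dotProductCLM ((2 : ℝ) • A *ᵥ u₀)) u₀ := by
  refine ((dotProductBilin ℝ ℝ).toContinuousBilinearMap.hasFDerivAt_of_bilinear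
    (hasFDerivAt_id u₀) A.mulVecLin.toContinuousLinearMap.hasFDerivAt).congr_fderiv ?_
  ext w
  simp [dotProduct_mulVec w, ← mulVec_transpose, hA.eq, two_smul, dotProduct_comm]

lemma dotProduct_mul_transpose_mulVec_pos {ι : Type*} [Fintype ι] [DecidableEq ι]
    {D : Matrix ι ι ℝ} (hD : IsUnit D) {u : ι → ℝ} (hu : u ≠ 0) : 0 < u ⬝ᵥ (D * Dᵀ) *ᵥ u := by
  simpa using
    (PosDef.mul_conjTranspose_self D (vecMul_injective_iff_isUnit.2 hD)).dotProduct_mulVec_pos hu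

lemma hasFDerivAt_mdist {d : ℕ} {A : Matrix (Fin d) (Fin d) ℝ} (hA : A.IsSymm)
    {u₀ : Fin d → ℝ} (hu₀ : u₀ ⬝ᵥ A *ᵥ u₀ ≠ 0) :
    HasFDerivAt (mdist A) (dotProductCLM ((mdist A u₀)⁻¹ • A *ᵥ u₀)) u₀ := by
  refine ((hasFDerivAt_dotProduct_mulVec_self hA u₀).sqrt hu₀).congr_fderiv ?_
  ext w
  simp only [mdist, _root_.smul_apply, dotProductCLM_apply, smul_dotProduct, smul_eq_mul]
  ring

lemma hasFDerivAt_mdist_sub {d : ℕ} {A : Matrix (Fin d) (Fin d) ℝ} (hA : A.IsSymm)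
    (x q₀ : Fin d → ℝ) (h : (x - q₀) ⬝ᵥ A *ᵥ (x - q₀) ≠ 0) :
    HasFDerivAt (fun q => mdist A (x - q))
      (dotProductCLM ((mdist A (x - q₀))⁻¹ • A *ᵥ (q₀ - x))) q₀ := by
  refine ((hasFDerivAt_mdist hA h).comp q₀ ((hasFDerivAt_id q₀).const_sub x)).congr_fderiv ?_
  ext w
  simp only [ContinuousLinearMap.comp_apply, _root_.neg_apply, ContinuousLinearMap.id_apply,
    dotProductCLM_apply]
  rw [dotProduct_neg, ← neg_dotProduct, ← smul_neg, ← mulVec_neg, neg_sub]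

section SoftmaxCalculus

variable {E : Type*} [NormedAddCommGroup E] [NormedSpace ℝ E] {h : E → ℝ} {h' : E →L[ℝ] ℝ}
  {q₀ : E} {K : ℝ}

theorem HasFDerivAt.exp_neg_div_exp_neg_add (hh : HasFDerivAt h h' q₀)
    (hK : Real.exp (-h q₀) + K ≠ 0) :
    HasFDerivAt (fun q => Real.exp (-h q) / (Real.exp (-h q) + K))
      ((Real.exp (-h q₀) / (Real.exp (-h q₀) + K) *
        (Real.exp (-h q₀) / (Real.exp (-h q₀) + K) - 1)) • h') q₀ := by
  have := ((hasDerivAt_id (Real.exp (-h q₀))).div ((hasDerivAt_id _).add_const K)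
    hK).comp_hasFDerivAt q₀ hh.neg.exp
  refine this.congr_fderiv ?_
  ext w
  simp only [_root_.smul_apply, _root_.neg_apply, smul_eq_mul, id, Pi.neg_apply]
  field_simp
  ring

theorem HasFDerivAt.const_div_exp_neg_add (c : ℝ) (hh : HasFDerivAt h h' q₀)
    (hK : Real.exp (-h q₀) + K ≠ 0) :
    HasFDerivAt (fun q => c / (Real.exp (-h q) + K))
      ((c / (Real.exp (-h q₀) + K) * (Real.exp (-h q₀) / (Real.exp (-h q₀) + K))) • h') q₀ := by
  have := ((hasDerivAt_const (Real.exp (-h q₀)) c).div ((hasDerivAt_id _).add_const K)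
    hK).comp_hasFDerivAt q₀ hh.neg.exp
  refine this.congr_fderiv ?_
  ext w
  simp only [_root_.smul_apply, _root_.neg_apply, smul_eq_mul, id, Pi.neg_apply]
  field_simp
  ring

end SoftmaxCalculus

section SiteDerivative

variable {d N : ℕ} (p : Fin N → Fin d → ℝ) (D : Fin N → Matrix (Fin d) (Fin d) ℝ) (ε : ℝ)
  (x : Fin d → ℝ)

lemma Sden_pos (hε : 0 ≤ ε) (n : Fin N) : 0 < Sden p D ε x :=
  add_pos_of_nonneg_of_pos hε (Finset.sum_pos (fun _ _ => Real.exp_pos _) ⟨n, Finset.mem_univ n⟩)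

lemma Sden_update (n : Fin N) (q : Fin d → ℝ) :
    Sden (Function.update p n q) D ε x = Real.exp (-mdist (D n * (D n)ᵀ) (x - q)) +
      (Sden p D ε x - Real.exp (-mdist (D n * (D n)ᵀ) (x - p n))) := by
  rw [Sden, Sden, ← Finset.add_sum_erase _ _ (Finset.mem_univ n),
    ← Finset.add_sum_erase _ _ (Finset.mem_univ n), Function.update_self,
    Finset.sum_congr rfl fun k hk => by rw [Function.update_of_ne (Finset.ne_of_mem_erase hk)]]
  ring

variable {p D ε x}

theorem hasFDerivAt_S_update {m n : Fin N} (hD : IsUnit (D n)) (hx : x ≠ p n)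
    (hden : Sden p D ε x ≠ 0) :
    HasFDerivAt (fun q => S (Function.update p n q) D ε x m)
      ((S p D ε x m * (S p D ε x n - if m = n then 1 else 0)) •
        dotProductCLM ((mdist (D n * (D n)ᵀ) (x - p n))⁻¹ • (D n * (D n)ᵀ) *ᵥ (p n - x)))
      (p n) := by
  have hY := hasFDerivAt_mdist_sub (isSymm_mul_transpose_self (D n)) x (p n)
    (dotProduct_mul_transpose_mulVec_pos hD (sub_ne_zero.2 hx)).ne'
  -- `K` is `ε` plus the weights of the sites that stay fixed
  set K := Sden p D ε x - Real.exp (-mdist (D n * (D n)ᵀ) (x - p n)) with hK_def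
  have hK : Real.exp (-mdist (D n * (D n)ᵀ) (x - p n)) + K ≠ 0 := by simpa [K] using hden
  have hS : ∀ k, S p D ε x k = Real.exp (-mdist (D k * (D k)ᵀ) (x - p k)) /
      (Real.exp (-mdist (D n * (D n)ᵀ) (x - p n)) + K) := by
    simp [S, K]
  rw [hS m, hS n]
  simp only [S, Sden_update, ← hK_def]
  rcases eq_or_ne m n with rfl | hmn
  · simp only [Function.update_self, ↓reduceIte]
    exact hY.exp_neg_div_exp_neg_add hK
  · simp only [Function.update_of_ne hmn, if_neg hmn, sub_zero]
    exact hY.const_div_exp_neg_add _ hK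

end SiteDerivative

/-- Regarding `S_m(x)` as a function of the `n`-th site point `x_n` (all other data fixed),
if `x ≠ x_n` then it is differentiable at `x_n` with gradient
`S_m(x)·(S_n(x) − δ_{mn})·Y_n(x)` where `Y_n(x) = A_n(x_n − x)/d_n(x, x_n)`
(the gradient being expressed through the Fréchet derivative `w ↦ ⟨grad, w⟩`). -/
theorem S_differentiableAt_site {d N : ℕ} (p : Fin N → Fin d → ℝ)
    (D : Fin N → Matrix (Fin d) (Fin d) ℝ) (hD : ∀ k, IsUnit (D k))
    (ε : ℝ) (hε : 0 ≤ ε) (x : Fin d → ℝ) (m n : Fin N) (hx : x ≠ p n) :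
    DifferentiableAt ℝ (fun q => S (Function.update p n q) D ε x m) (p n) ∧
      ∀ w : Fin d → ℝ,
        fderiv ℝ (fun q => S (Function.update p n q) D ε x m) (p n) w =
          S p D ε x m * (S p D ε x n - if m = n then 1 else 0) *
            (((mdist (D n * (D n)ᵀ) (x - p n))⁻¹ •
              (D n * (D n)ᵀ).mulVec (p n - x)) ⬝ᵥ w) := by
  have h := hasFDerivAt_S_update (m := m) (hD n) hx (Sden_pos p D ε x hε n).ne'
  refine ⟨h.differentiableAt, fun w => ?_⟩
  rw [h.fderiv, _root_.smul_apply, dotProductCLM_apply, smul_eq_mul]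
end

section
/- Fix n, m ∈ {1,…,N}. Regard S_m(x) as a function of the n-th metric matrix D_n (all sites, all other matrices, the evaluation point x, and ε_s ≥ 0 being fixed). If D_nᵀ(x − x_n) ≠ 0 (so d_n(x, x_n) > 0), then this function is differentiable at D_n and its Fréchet derivative in the matrix direction H equals S_m(x)·(S_n(x) − δ_{mn})·(vᵀ H D_nᵀ v)/d_n(x, x_n) with v = x − x_n; equivalently, the gradient matrix is S_m(x)·(S_n(x) − δ_{mn})·d_n(x, x_n)·(X_n ⊗ X_n) D_n with X_n = (x_n − x)/d_n(x, x_n). -/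
/-
`S_m` is a softmin of the distance vector `(d_1, …, d_N)` with an extra mass `ε_s` in the
denominator, and its partial derivatives are `∂S_m/∂d_n = S_m (S_n - δ_mn)`. The matrix `D_n`
enters only through `d_n = ‖D_nᵀ v‖`, `v = x - x_n`, which is differentiable wherever
`D_nᵀ v ≠ 0`, with derivative `⟪D_nᵀ v, Hᵀ v⟫ / d_n = vᵀ H D_nᵀ v / d_n` in direction `H`.
The chain rule combines the two.
-/

open Matrix

open Function Real

theorem HasFDerivAt.norm {G F : Type*} [NormedAddCommGroup G] [NormedSpace ℝ G]
    [NormedAddCommGroup F] [InnerProductSpace ℝ F] {f : G → F} {f' : G →L[ℝ] F} {x : G}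
    (hf : HasFDerivAt f f' x) (h0 : f x ≠ 0) :
    HasFDerivAt (fun y => ‖f y‖) (‖f x‖⁻¹ • (innerSL ℝ (f x)).comp f') x := by
  have h := (hf.norm_sq).sqrt (by positivity)
  simp only [Real.sqrt_sq (norm_nonneg _)] at h
  convert h using 1
  ext y
  simp [field]

section

variable {ι κ : Type*} [Fintype ι] [Fintype κ]

noncomputable def vecMulCLM (v : ι → ℝ) : (ι → κ → ℝ) →L[ℝ] EuclideanSpace ℝ κ :=
  LinearMap.toContinuousLinearMap
    ((WithLp.linearEquiv 2 ℝ (κ → ℝ)).symm.toLinearMap ∘ₗ Matrix.vecMulBilin ℝ ℝ v)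

theorem vecMulCLM_apply (v : ι → ℝ) (M : ι → κ → ℝ) :
    vecMulCLM v M = WithLp.toLp 2 (v ᵥ* of M) := rfl

end

theorem mdist_mul_transpose {d : ℕ} (B : Matrix (Fin d) (Fin d) ℝ) (v : Fin d → ℝ) :
    mdist (B * Bᵀ) v = ‖WithLp.toLp 2 (v ᵥ* B)‖ := by
  rw [mdist, norm_eq_sqrt_real_inner, EuclideanSpace.inner_toLp_toLp, ← mulVec_mulVec,
    dotProduct_mulVec, mulVec_transpose]
  rfl

theorem hasFDerivAt_mdist_mul_transpose {d : ℕ} (v : Fin d → ℝ) (B : Fin d → Fin d → ℝ)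
    (h : (of B)ᵀ *ᵥ v ≠ 0) :
    ∃ L : (Fin d → Fin d → ℝ) →L[ℝ] ℝ,
      HasFDerivAt (fun M : Fin d → Fin d → ℝ => mdist (of M * (of M)ᵀ) v) L B ∧
      ∀ H, L H = v ⬝ᵥ (of H * (of B)ᵀ) *ᵥ v / mdist (of B * (of B)ᵀ) v := by
  have h0 : vecMulCLM v B ≠ 0 := by
    rwa [vecMulCLM_apply, Ne, WithLp.toLp_eq_zero, ← mulVec_transpose]
  refine ⟨_, ((vecMulCLM v).hasFDerivAt.norm h0).congr_of_eventuallyEq ?_, fun H => ?_⟩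
  · exact Filter.Eventually.of_forall fun M => mdist_mul_transpose (of M) v
  · simp only [_root_.smul_apply, ContinuousLinearMap.comp_apply, innerSL_apply_apply,
      vecMulCLM_apply, smul_eq_mul, EuclideanSpace.inner_toLp_toLp, star_trivial,
      mdist_mul_transpose]
    rw [inv_mul_eq_div, ← mulVec_mulVec, dotProduct_mulVec, mulVec_transpose]

noncomputable def softmin {ι : Type*} [Fintype ι] (ε : ℝ) (r : ι → ℝ) (m : ι) : ℝ :=
  exp (-r m) / (ε + ∑ k, exp (-r k))

theorem hasDerivAt_exp_neg_update {ι : Type*} [DecidableEq ι] (r : ι → ℝ) (n k : ι) :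
    HasDerivAt (fun t => exp (-update r n t k)) (if k = n then -exp (-r n) else 0) (r n) := by
  rcases eq_or_ne k n with rfl | hkn
  · simpa using (hasDerivAt_neg (r k)).exp
  · simpa [update_of_ne hkn, if_neg hkn] using hasDerivAt_const (r n) (exp (-r k))

theorem hasDerivAt_softmin_update {ι : Type*} [Fintype ι] [DecidableEq ι] {ε : ℝ} (hε : 0 ≤ ε)
    (r : ι → ℝ) (m n : ι) :
    HasDerivAt (fun t => softmin ε (update r n t) m)
      (softmin ε r m * (softmin ε r n - if m = n then 1 else 0)) (r n) := by
  have hden : HasDerivAt (fun t => ε + ∑ k, exp (-update r n t k)) (-exp (-r n)) (r n) := by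
    simpa using (HasDerivAt.fun_sum (u := Finset.univ)
      fun k _ => hasDerivAt_exp_neg_update r n k).const_add ε
  have hpos : 0 < ε + ∑ k, exp (-r k) :=
    add_pos_of_nonneg_of_pos hε (Finset.sum_pos (fun k _ => exp_pos _) ⟨n, Finset.mem_univ n⟩)
  refine ((hasDerivAt_exp_neg_update r n m).fun_div hden (by simpa using hpos.ne')).congr_deriv ?_
  simp only [softmin, update_eq_self]
  field_simp
  split_ifs with hmn
  · subst hmn; ring
  · ring

theorem S_eq_softmin {d N : ℕ} (p : Fin N → Fin d → ℝ) (D : Fin N → Matrix (Fin d) (Fin d) ℝ)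
    (ε : ℝ) (x : Fin d → ℝ) (m : Fin N) :
    S p D ε x m = softmin ε (fun k => mdist (D k * (D k)ᵀ) (x - p k)) m := rfl

/-- Regarding `S_m(x)` as a function of the `n`-th metric matrix `D_n` (all other data
fixed; matrices encoded as `Fin d → Fin d → ℝ`, carrying the Frobenius pairing in the
direction `H`), if `D_nᵀ(x − x_n) ≠ 0` then it is differentiable at `D_n` and its
Fréchet derivative in the direction `H` equals
`S_m(x)·(S_n(x) − δ_{mn})·(vᵀ H D_nᵀ v)/d_n(x, x_n)` with `v = x − x_n`;
equivalently the gradient matrix is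
`S_m(x)·(S_n(x) − δ_{mn})·d_n(x, x_n)·(X_n ⊗ X_n) D_n`, `X_n = (x_n − x)/d_n(x, x_n)`. -/
theorem S_differentiableAt_metric {d N : ℕ} (p : Fin N → Fin d → ℝ)
    (D : Fin N → Matrix (Fin d) (Fin d) ℝ)
    (ε : ℝ) (hε : 0 ≤ ε) (x : Fin d → ℝ) (m n : Fin N)
    (h : (D n)ᵀ.mulVec (x - p n) ≠ 0) :
    DifferentiableAt ℝ
        (fun M : Fin d → Fin d → ℝ =>
          S p (Function.update D n (Matrix.of M)) ε x m) (D n) ∧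
      ∀ H : Fin d → Fin d → ℝ,
        fderiv ℝ (fun M : Fin d → Fin d → ℝ =>
            S p (Function.update D n (Matrix.of M)) ε x m) (D n) H =
          S p D ε x m * (S p D ε x n - if m = n then 1 else 0) *
            ((x - p n) ⬝ᵥ (Matrix.of H * (D n)ᵀ).mulVec (x - p n)) /
              mdist (D n * (D n)ᵀ) (x - p n) := by
  set r : Fin N → ℝ := fun k => mdist (D k * (D k)ᵀ) (x - p k)
  obtain ⟨L, hL, hL_apply⟩ := hasFDerivAt_mdist_mul_transpose (x - p n) (D n) h
  have hS : (fun M : Fin d → Fin d → ℝ => S p (update D n (of M)) ε x m) =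
      (fun t => softmin ε (update r n t) m) ∘ fun M => mdist (of M * (of M)ᵀ) (x - p n) := by
    funext M
    simp only [S_eq_softmin, Function.comp_apply]
    congr 1
    funext k
    exact apply_update (fun k B => mdist (B * Bᵀ) (x - p k)) D n (of M) k
  have hF := (hasDerivAt_softmin_update hε r m n).comp_hasFDerivAt
    (f := fun M : Fin d → Fin d → ℝ => mdist (of M * (of M)ᵀ) (x - p n)) (D n) hL
  rw [hS]
  refine ⟨hF.differentiableAt, fun H => ?_⟩
  rw [hF.fderiv, _root_.smul_apply, hL_apply, smul_eq_mul, mul_div_assoc]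
  rfl
end
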